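/- arXiv:2505.08062 — 2 statements merged into one kernel-verified Lean document; each statement's English description precedes it below -/
import Mathlib

section
/- Let 𝒜 be a compact set of non-negative self-adjoint trace-class covariance operators on a separable Hilbert space H. Then there exists t₀ > 0 such that sup_{K ∈ 𝒜} ∫_H exp(t₀ ‖h‖_H²) 𝒩_H(0,K)(dh) < ∞, and moreover for every ε ∈ (0,2) and every t > 0, sup_{K ∈ 𝒜} ∫_H exp(t ‖h‖_H^{2−ε}) 𝒩_H(0,K)(dh) < ∞. -/
open Filter MeasureTheory
open scoped ENNReal

/-- The trace norm `‖T‖₁` of a bounded operator, defined as the supremum over finite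
orthonormal families `e, f` of `∑ i, |⟪T e_i, f_i⟫|`, valued in `[0,∞]`. -/
noncomputable def traceNorm {H : Type*} [NormedAddCommGroup H] [InnerProductSpace ℝ H]
    (T : H →L[ℝ] H) : ℝ≥0∞ :=
  ⨆ (n : ℕ) (e : Fin n → H) (f : Fin n → H) (_ : Orthonormal ℝ e)
    (_ : Orthonormal ℝ f), ∑ i, (‖(inner ℝ (T (e i)) (f i) : ℝ)‖₊ : ℝ≥0∞)

/-- The Hilbert–Schmidt norm `‖T‖₂`, defined as the square root of the supremum over finite
orthonormal families `e` of `∑ i, ‖T e_i‖²`, valued in `[0,∞]`. -/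
noncomputable def hsNorm {H : Type*} [NormedAddCommGroup H] [InnerProductSpace ℝ H]
    (T : H →L[ℝ] H) : ℝ≥0∞ :=
  (⨆ (n : ℕ) (e : Fin n → H) (_ : Orthonormal ℝ e),
    ∑ i, (‖T (e i)‖₊ : ℝ≥0∞) ^ 2) ^ (1 / 2 : ℝ)
open ProbabilityTheory

/-- `μ` is the centered Gaussian measure on the Hilbert space `H` with covariance operator
`K`: for every `g ∈ H` the pushforward of `μ` under `h ↦ ⟪g, h⟫` is the one-dimensional
Gaussian `N(0, ⟪K g, g⟫)`. -/
def IsCenteredGaussian {H : Type*} [NormedAddCommGroup H] [InnerProductSpace ℝ H]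
    [MeasurableSpace H] (μ : Measure H) (K : H →L[ℝ] H) : Prop :=
  IsProbabilityMeasure μ ∧ ∀ g : H,
    Measure.map (fun h => (inner ℝ g h : ℝ)) μ
      = gaussianReal 0 (Real.toNNReal (inner ℝ (K g) g : ℝ))

/-- A set of operators is (sequentially) compact in the trace norm. -/
def TraceNormCompact {H : Type*} [NormedAddCommGroup H] [InnerProductSpace ℝ H]
    (𝒜 : Set (H →L[ℝ] H)) : Prop :=
  ∀ u : ℕ → (H →L[ℝ] H), (∀ n, u n ∈ 𝒜) →
    ∃ K ∈ 𝒜, ∃ φ : ℕ → ℕ, StrictMono φ ∧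
      Filter.Tendsto (fun k => traceNorm (u (φ k) - K)) Filter.atTop (nhds 0)

section UniformFerniqueAux

open MeasureTheory Real ProbabilityTheory Filter
open scoped ENNReal NNReal Topology
open Submodule

lemma aux_gaussPDF_mul (s : ℝ) (v : ℝ≥0) (y : ℝ) :
    Real.exp (s * y) * gaussianPDFReal 0 v y
      = Real.exp (s ^ 2 * v / 2) * gaussianPDFReal (s * v) v y := by
  unfold gaussianPDFReal
  rcases eq_or_ne (v : ℝ) 0 with h | h
  · simp [h]
  · have hv : (0:ℝ) < v := lt_of_le_of_ne v.2 (Ne.symm h)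
    rw [mul_left_comm, mul_left_comm (Real.exp _), ← Real.exp_add, ← Real.exp_add]
    congr 2
    field_simp
    ring

lemma lintegral_exp_mul_gaussianReal (s : ℝ) (v : ℝ≥0) :
    ∫⁻ y, ENNReal.ofReal (Real.exp (s * y)) ∂(gaussianReal 0 v)
      = ENNReal.ofReal (Real.exp (s ^ 2 * v / 2)) := by
  rcases eq_or_ne v 0 with rfl | hv
  · rw [gaussianReal_zero_var, lintegral_dirac' _ (by fun_prop)]
    simp
  · rw [gaussianReal_of_var_ne_zero _ hv,
      lintegral_withDensity_eq_lintegral_mul _ (measurable_gaussianPDF _ _) (by fun_prop)]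
    have hpt : ∀ y : ℝ, (gaussianPDF 0 v * fun y => ENNReal.ofReal (Real.exp (s * y))) y
        = ENNReal.ofReal (Real.exp (s ^ 2 * v / 2)) * gaussianPDF (s * v) v y := by
      intro y
      simp only [Pi.mul_apply, gaussianPDF]
      rw [← ENNReal.ofReal_mul (gaussianPDFReal_nonneg _ _ _),
        ← ENNReal.ofReal_mul (Real.exp_nonneg _), mul_comm (gaussianPDFReal 0 v y),
        aux_gaussPDF_mul]
    simp only [hpt]
    rw [lintegral_const_mul _ (measurable_gaussianPDF _ _), lintegral_gaussianPDF_eq_one _ hv,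
      mul_one]

lemma lintegral_exp_sq_gaussianReal {c : ℝ} (hc : 0 ≤ c) (hc' : c ≤ 1/4) :
    ∫⁻ y, ENNReal.ofReal (Real.exp (c * y ^ 2)) ∂(gaussianReal 0 1)
      ≤ ENNReal.ofReal (Real.exp (2 * c)) := by
  have hv : (1 : ℝ≥0) ≠ 0 := one_ne_zero
  have hbpos : (0:ℝ) < 1/2 - c := by linarith
  rw [gaussianReal_of_var_ne_zero _ hv,
    lintegral_withDensity_eq_lintegral_mul _ (measurable_gaussianPDF _ _) (by fun_prop)]
  have hpt : ∀ y : ℝ, (gaussianPDF 0 1 * fun y => ENNReal.ofReal (Real.exp (c * y ^ 2))) y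
      = ENNReal.ofReal ((Real.sqrt (2 * π))⁻¹ * Real.exp (-(1/2 - c) * y ^ 2)) := by
    intro y
    simp only [Pi.mul_apply, gaussianPDF]
    rw [← ENNReal.ofReal_mul (gaussianPDFReal_nonneg _ _ _)]
    congr 1
    unfold gaussianPDFReal
    rw [NNReal.coe_one, mul_one, mul_assoc, ← Real.exp_add]
    congr 1
    ring
  simp only [hpt]
  have hint : Integrable (fun y : ℝ => (Real.sqrt (2 * π))⁻¹ * Real.exp (-(1/2 - c) * y ^ 2)) :=
    (integrable_exp_neg_mul_sq hbpos).const_mul _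
  rw [← ofReal_integral_eq_lintegral_ofReal hint (Filter.Eventually.of_forall fun y =>
    mul_nonneg (inv_nonneg.2 (Real.sqrt_nonneg _)) (Real.exp_nonneg _))]
  rw [integral_const_mul, integral_gaussian]
  apply ENNReal.ofReal_le_ofReal
  have h1 : (Real.sqrt (2 * π))⁻¹ * Real.sqrt (π / (1/2 - c)) = Real.sqrt (1 / (2 * (1/2 - c))) := by
    rw [← Real.sqrt_inv, ← Real.sqrt_mul (by positivity)]
    congr 1
    have hπ : (0:ℝ) < π := pi_pos
    rw [inv_mul_eq_div, div_div, div_eq_div_iff (by positivity) (by positivity)]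
    ring
  rw [h1]
  have h2 : 1 / (2 * (1/2 - c)) ≤ Real.exp (2 * c) ^ 2 := by
    have hsq : Real.exp (2 * c) ^ 2 = Real.exp (4 * c) := by
      rw [sq, ← Real.exp_add]; ring_nf
    rw [hsq, div_le_iff₀ (by linarith)]
    have he : 1 + 4 * c ≤ Real.exp (4 * c) := Real.add_one_le_exp (4 * c) |>.trans_eq (by ring) |> fun h => by linarith [Real.add_one_le_exp (4 * c)]
    nlinarith
  calc Real.sqrt (1 / (2 * (1/2 - c))) ≤ Real.sqrt (Real.exp (2 * c) ^ 2) := Real.sqrt_le_sqrt h2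
  _ = Real.exp (2 * c) := Real.sqrt_sq (Real.exp_nonneg _)

lemma lintegral_pi_prod {γ : Measure ℝ} [SigmaFinite γ] : ∀ {n : ℕ} (f : Fin n → ℝ → ℝ≥0∞),
    (∀ i, Measurable (f i)) →
    ∫⁻ y : Fin n → ℝ, ∏ i, f i (y i) ∂(Measure.pi fun _ => γ) = ∏ i, ∫⁻ z, f i z ∂γ := by
  intro n
  induction n with
  | zero =>
    intro f _
    simp [Measure.pi_empty_univ]
  | succ n ih =>
    intro f hf
    have hmp := (measurePreserving_piFinSuccAbove (fun _ : Fin (n+1) => γ) 0).symm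
    rw [← hmp.lintegral_comp_emb (MeasurableEquiv.measurableEmbedding _)]
    simp_rw [MeasurableEquiv.piFinSuccAbove_symm_apply, Fin.insertNthEquiv,
      Fin.prod_univ_succ, Fin.insertNth_zero, Equiv.coe_fn_mk, Fin.cons_zero, Fin.cons_succ]
    simp only [cast_eq]
    have key : ∫⁻ (x : ℝ × (Fin n → ℝ)),
        f 0 x.1 * ∏ i : Fin n, f i.succ (x.2 i) ∂(γ.prod (Measure.pi fun _ => γ))
        = (∫⁻ z, f 0 z ∂γ) * ∫⁻ y : Fin n → ℝ, ∏ i : Fin n, f i.succ (y i)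
            ∂(Measure.pi fun _ => γ) := by
      exact lintegral_prod_mul (hf 0).aemeasurable
        (Finset.measurable_prod _ (fun (i : Fin n) (_ : i ∈ Finset.univ) => (hf i.succ).comp (measurable_pi_apply i))).aemeasurable
    rw [key, ih _ fun i => hf i.succ]

variable {H : Type*} [NormedAddCommGroup H] [InnerProductSpace ℝ H] [CompleteSpace H]
  [SecondCountableTopology H] [MeasurableSpace H] [BorelSpace H]

lemma key_bound (μ : Measure H) [IsProbabilityMeasure μ] (K : H →L[ℝ] H)
    (hμ : ∀ g : H, Measure.map (fun h => (inner ℝ g h : ℝ)) μ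
      = gaussianReal 0 (Real.toNNReal (inner ℝ (K g) g : ℝ)))
    (hKpos : ∀ g : H, 0 ≤ (inner ℝ (K g) g : ℝ))
    {m : ℕ} (f : Fin m → H)
    (hdiag : ∀ i j, i ≠ j → (inner ℝ (K (f i)) (f j) : ℝ) = 0)
    {t : ℝ} (ht : 0 < t) (ht4 : ∀ i, t * (inner ℝ (K (f i)) (f i) : ℝ) ≤ 1/4) :
    ∫⁻ x, ENNReal.ofReal (Real.exp (t * ∑ i, (inner ℝ (f i) x : ℝ)^2)) ∂μ
      ≤ ENNReal.ofReal (Real.exp (2 * t * ∑ i, (inner ℝ (K (f i)) (f i) : ℝ))) := by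
  set s : ℝ := Real.sqrt (2*t) with hs
  have hs2 : s^2 = 2*t := Real.sq_sqrt (by linarith)
  let ν : Measure (Fin m → ℝ) := Measure.pi fun _ => gaussianReal 0 1
  set lam : Fin m → ℝ := fun i => (inner ℝ (K (f i)) (f i) : ℝ) with hlam
  have hlam0 : ∀ i, 0 ≤ lam i := fun i => hKpos (f i)
  -- Step 1: pointwise linearization
  have step1 : ∀ x : H, ENNReal.ofReal (Real.exp (t * ∑ i, (inner ℝ (f i) x : ℝ)^2))
      = ∫⁻ y : Fin m → ℝ, ENNReal.ofReal
          (Real.exp (s * ∑ i, y i * (inner ℝ (f i) x : ℝ))) ∂ν := by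
    intro x
    have hpt : ∀ y : Fin m → ℝ, ENNReal.ofReal (Real.exp (s * ∑ i, y i * (inner ℝ (f i) x : ℝ)))
        = ∏ i, ENNReal.ofReal (Real.exp ((s * (inner ℝ (f i) x : ℝ)) * y i)) := by
      intro y
      rw [← ENNReal.ofReal_prod_of_nonneg (fun i _ => Real.exp_nonneg _), ← Real.exp_sum,
        Finset.mul_sum]
      congr 2
      exact Finset.sum_congr rfl fun i _ => by ring
    simp_rw [hpt]
    rw [show ν = Measure.pi fun _ => gaussianReal 0 1 from rfl,
      lintegral_pi_prod (fun i z => ENNReal.ofReal (Real.exp ((s * (inner ℝ (f i) x : ℝ)) * z)))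
      (fun i => by fun_prop)]
    have : ∀ i : Fin m, ∫⁻ z, ENNReal.ofReal (Real.exp ((s * (inner ℝ (f i) x : ℝ)) * z))
        ∂(gaussianReal 0 1) = ENNReal.ofReal (Real.exp (t * (inner ℝ (f i) x : ℝ)^2)) := by
      intro i
      rw [lintegral_exp_mul_gaussianReal]
      congr 1
      push_cast
      rw [mul_pow, hs2]
      ring
    simp_rw [this]
    rw [← ENNReal.ofReal_prod_of_nonneg (fun i _ => Real.exp_nonneg _), ← Real.exp_sum,
      Finset.mul_sum]
  simp_rw [step1]
  -- Step 2: swap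
  have hFcont : Continuous (fun p : H × (Fin m → ℝ) =>
      ENNReal.ofReal (Real.exp (s * ∑ i, p.2 i * (inner ℝ (f i) p.1 : ℝ)))) := by
    refine ENNReal.continuous_ofReal.comp (Real.continuous_exp.comp (continuous_const.mul ?_))
    exact continuous_finset_sum _ fun i _ =>
      ((continuous_apply i).comp continuous_snd).mul
        (Continuous.inner continuous_const continuous_fst)
  rw [lintegral_lintegral_swap hFcont.measurable.aemeasurable]
  -- Step 3: inner ℝ integral
  have step3 : ∀ y : Fin m → ℝ, ∫⁻ x, ENNReal.ofReal
      (Real.exp (s * ∑ i, y i * (inner ℝ (f i) x : ℝ))) ∂μ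
      = ENNReal.ofReal (Real.exp (t * ∑ i, lam i * (y i)^2)) := by
    intro y
    have ha : ∀ x : H, ∑ i, y i * (inner ℝ (f i) x : ℝ) = (inner ℝ (∑ i, y i • f i) x : ℝ) := by
      intro x
      rw [sum_inner]
      exact Finset.sum_congr rfl fun i _ => (real_inner_smul_left _ _ _).symm
    simp_rw [ha]
    have hmeas : Measurable fun x : H => (inner ℝ (∑ i, y i • f i) x : ℝ) :=
      (Continuous.inner continuous_const continuous_id).measurable
    rw [show (∫⁻ x, ENNReal.ofReal (Real.exp (s * (inner ℝ (∑ i, y i • f i) x : ℝ))) ∂μ)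
        = ∫⁻ z, ENNReal.ofReal (Real.exp (s * z))
            ∂(Measure.map (fun x : H => (inner ℝ (∑ i, y i • f i) x : ℝ)) μ) from
      (lintegral_map (by fun_prop : Measurable fun z : ℝ => ENNReal.ofReal (Real.exp (s * z))) hmeas).symm, hμ, lintegral_exp_mul_gaussianReal]
    congr 1
    have hterm : ∀ j : Fin m, (inner ℝ (K (y j • f j)) (∑ i, y i • f i) : ℝ)
        = lam j * (y j)^2 := by
      intro j
      rw [_root_.map_smul, inner_sum]
      simp_rw [real_inner_smul_left, real_inner_smul_right]
      rw [Finset.sum_eq_single j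
        (fun i _ hij => by simp [hdiag j i (Ne.symm hij)])
        (fun h => absurd (Finset.mem_univ j) h)]
      rw [hlam]; ring
    have hq : (inner ℝ (K (∑ i, y i • f i)) (∑ i, y i • f i) : ℝ) = ∑ i, lam i * (y i)^2 := by
      rw [map_sum, sum_inner]
      exact Finset.sum_congr rfl fun j _ => hterm j
    rw [hq]
    have hnn : (0:ℝ) ≤ ∑ i, lam i * (y i)^2 :=
      Finset.sum_nonneg fun i _ => mul_nonneg (hlam0 i) (sq_nonneg _)
    rw [Real.coe_toNNReal _ hnn]
    rw [hs2]
    ring_nf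
  simp_rw [step3]
  -- Step 4
  have hpt4 : ∀ y : Fin m → ℝ, ENNReal.ofReal (Real.exp (t * ∑ i, lam i * (y i)^2))
      = ∏ i, ENNReal.ofReal (Real.exp ((t * lam i) * (y i)^2)) := by
    intro y
    rw [← ENNReal.ofReal_prod_of_nonneg (fun i _ => Real.exp_nonneg _), ← Real.exp_sum,
      Finset.mul_sum]
    congr 2
    exact Finset.sum_congr rfl fun i _ => by ring
  simp_rw [hpt4]
  rw [show ν = Measure.pi fun _ => gaussianReal 0 1 from rfl,
    lintegral_pi_prod (fun i z => ENNReal.ofReal (Real.exp ((t * lam i) * z^2)))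
    (fun i => by fun_prop)]
  calc ∏ i, ∫⁻ z, ENNReal.ofReal (Real.exp ((t * lam i) * z^2)) ∂(gaussianReal 0 1)
      ≤ ∏ i, ENNReal.ofReal (Real.exp (2 * (t * lam i))) :=
        Finset.prod_le_prod' fun i _ => lintegral_exp_sq_gaussianReal
          (mul_nonneg ht.le (hlam0 i)) (ht4 i)
    _ = ENNReal.ofReal (Real.exp (2 * t * ∑ i, lam i)) := by
        rw [← ENNReal.ofReal_prod_of_nonneg (fun i _ => Real.exp_nonneg _), ← Real.exp_sum,
          Finset.mul_sum]
        congr 2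
        exact Finset.sum_congr rfl fun i _ => by ring


lemma proj_norm_mono {V W : Submodule ℝ H} [HasOrthogonalProjection V]
    [HasOrthogonalProjection W] (h : V ≤ W) (x : H) :
    ‖(orthogonalProjection V x : H)‖ ≤ ‖(orthogonalProjection W x : H)‖ := by
  have key : orthogonalProjection V x = orthogonalProjection V (orthogonalProjection W x : H) := by
    conv_lhs => rw [← starProjection_add_starProjection_orthogonal (K := W) x]
    rw [map_add, starProjection_apply, starProjection_apply, orthogonalProjectionOnto_apply_of_mem_orthogonal
      (Submodule.orthogonal_le h (orthogonalProjection Wᗮ x).2), add_zero]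
  rw [key]
  have := ContinuousLinearMap.le_of_opNorm_le (orthogonalProjection V)
    (orthogonalProjection_norm_le V) (orthogonalProjection W x : H)
  simpa using this

lemma dist_proj_le {V : Submodule ℝ H} [HasOrthogonalProjection V] (x : H) {w : H} (hw : w ∈ V) :
    ‖x - (orthogonalProjection V x : H)‖ ≤ ‖x - w‖ := by
  rw [← starProjection_apply, starProjection_minimal]
  have bdd : BddBelow (Set.range fun v : V => ‖x - (v : H)‖) :=
    ⟨0, fun z ⟨v, hv⟩ => hv ▸ norm_nonneg _⟩
  exact ciInf_le_of_le bdd ⟨w, hw⟩ le_rfl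

lemma diagonalize (K : H →L[ℝ] H) (hK : ∀ x y : H, (inner ℝ (K x) y : ℝ) = (inner ℝ x (K y) : ℝ))
    (V : Submodule ℝ H) [FiniteDimensional ℝ V] [HasOrthogonalProjection V] :
    ∃ f : Fin (Module.finrank ℝ V) → H, Orthonormal ℝ f ∧
      (∀ i j, i ≠ j → (inner ℝ (K (f i)) (f j) : ℝ) = 0) ∧
      (∀ x : H, ‖(orthogonalProjection V x : H)‖^2 = ∑ i, (inner ℝ (f i) x : ℝ)^2) := by
  set m := Module.finrank ℝ V with hm
  let T : V →ₗ[ℝ] V := ((orthogonalProjection V).comp (K.comp V.subtypeL)).toLinearMap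
  have hT : T.IsSymmetric := by
    intro u v
    have h1 : (inner ℝ (T u) v : ℝ) = (inner ℝ (K (u : H)) (v : H) : ℝ) := by
      simp only [T, ContinuousLinearMap.coe_coe, ContinuousLinearMap.comp_apply,
        Submodule.subtypeL_apply]
      exact inner_orthogonalProjection_eq_of_mem_right (K := V) v _
    have h2 : (inner ℝ u (T v) : ℝ) = (inner ℝ (u : H) (K (v : H)) : ℝ) := by
      simp only [T, ContinuousLinearMap.coe_coe, ContinuousLinearMap.comp_apply,
        Submodule.subtypeL_apply]
      exact inner_orthogonalProjection_eq_of_mem_left (K := V) u _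
    rw [h1, h2, hK]
  let b : OrthonormalBasis (Fin m) ℝ V := hT.eigenvectorBasis rfl
  refine ⟨fun i => (b i : H), ?_, ?_, ?_⟩
  · rw [orthonormal_iff_ite]
    intro i j
    rw [← Submodule.coe_inner]
    rw [← orthonormal_iff_ite.1 b.orthonormal i j]
  · intro i j hij
    have h1 : (inner ℝ (K ((b i : H))) ((b j : H)) : ℝ) = (inner ℝ (T (b i)) (b j) : ℝ) := by
      simp only [T, ContinuousLinearMap.coe_coe, ContinuousLinearMap.comp_apply,
        Submodule.subtypeL_apply]
      exact (inner_orthogonalProjection_eq_of_mem_right (K := V) (b j) _).symm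
    rw [h1, hT.apply_eigenvectorBasis, inner_smul_left]
    rw [orthonormal_iff_ite.1 b.orthonormal i j]
    simp [hij]
  · intro x
    have h1 : ∀ i, (inner ℝ ((b i : H)) x : ℝ) = (inner ℝ (b i) (orthogonalProjection V x) : ℝ) :=
      fun i => (inner_orthogonalProjection_eq_of_mem_left (K := V) (b i) x).symm
    simp_rw [h1]
    have h2 : ‖(orthogonalProjection V x : H)‖ = ‖orthogonalProjection V x‖ := rfl
    rw [h2, ← b.repr.norm_map (orthogonalProjection V x), EuclideanSpace.norm_eq]
    rw [Real.sq_sqrt (Finset.sum_nonneg fun i _ => sq_nonneg _)]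
    exact Finset.sum_congr rfl fun i _ => by rw [Real.norm_eq_abs, sq_abs, b.repr_apply_apply]


lemma traceNorm_add_le (S T : H →L[ℝ] H) :
    traceNorm (S + T) ≤ traceNorm S + traceNorm T := by
  refine iSup_le fun n => iSup_le fun e => iSup_le fun f => iSup_le fun he => iSup_le fun hf => ?_
  have h1 : ∑ i, (‖(inner ℝ ((S + T) (e i)) (f i) : ℝ)‖₊ : ℝ≥0∞)
      ≤ ∑ i, ((‖(inner ℝ (S (e i)) (f i) : ℝ)‖₊ : ℝ≥0∞) + (‖(inner ℝ (T (e i)) (f i) : ℝ)‖₊ : ℝ≥0∞)) := by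
    refine Finset.sum_le_sum fun i _ => ?_
    rw [ContinuousLinearMap.add_apply, inner_add_left, ← ENNReal.coe_add]
    exact_mod_cast nnnorm_add_le _ _
  rw [Finset.sum_add_distrib] at h1
  refine h1.trans (add_le_add ?_ ?_) <;>
  · exact le_iSup_of_le n (le_iSup_of_le e (le_iSup_of_le f
      (le_iSup_of_le he (le_iSup_of_le hf le_rfl))))

lemma traceNorm_bound_of_compact {𝒜 : Set (H →L[ℝ] H)}
    (htc : ∀ K ∈ 𝒜, traceNorm K ≠ ⊤) (hcompact : TraceNormCompact 𝒜) :
    ∃ M : ℝ≥0∞, M ≠ ⊤ ∧ ∀ K ∈ 𝒜, traceNorm K ≤ M := by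
  by_contra hcon
  push_neg at hcon
  have hall : ∀ n : ℕ, ∃ K ∈ 𝒜, (n : ℝ≥0∞) < traceNorm K := by
    intro n
    obtain ⟨K, hK, hlt⟩ := hcon (n : ℝ≥0∞) (by simp)
    exact ⟨K, hK, hlt⟩
  choose u hu hulb using hall
  obtain ⟨K, hK, φ, hφ, htend⟩ := hcompact u hu
  have hev : ∀ᶠ k in atTop, traceNorm (u (φ k) - K) < 1 :=
    htend.eventually_lt_const zero_lt_one
  have hfin : (1 : ℝ≥0∞) + traceNorm K ≠ ⊤ := by
    simp [htc K hK]
  obtain ⟨k₀, hk₀⟩ := ENNReal.exists_nat_gt hfin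
  obtain ⟨k, hk1, hk2⟩ := (hev.and (eventually_ge_atTop k₀)).exists
  have hb : traceNorm (u (φ k)) ≤ traceNorm (u (φ k) - K) + traceNorm K := by
    have := traceNorm_add_le (u (φ k) - K) K
    rwa [sub_add_cancel] at this
  have h1 : traceNorm (u (φ k)) < 1 + traceNorm K :=
    hb.trans_lt (ENNReal.add_lt_add_right (htc K hK) hk1)
  have h2 : (k₀ : ℝ≥0∞) ≤ traceNorm (u (φ k)) := by
    calc (k₀ : ℝ≥0∞) ≤ (k : ℝ≥0∞) := by exact_mod_cast hk2
    _ ≤ (φ k : ℝ≥0∞) := by exact_mod_cast hφ.le_apply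
    _ ≤ traceNorm (u (φ k)) := (hulb (φ k)).le
  exact absurd ((h2.trans_lt h1).trans hk₀) (lt_irrefl _)


lemma partial_trace_le {K : H →L[ℝ] H} {M : ℝ≥0∞} (hM : M ≠ ⊤) (hKM : traceNorm K ≤ M)
    {m : ℕ} {f : Fin m → H} (hf : Orthonormal ℝ f)
    (hnn : ∀ i, 0 ≤ (inner ℝ (K (f i)) (f i) : ℝ)) :
    ∑ i, (inner ℝ (K (f i)) (f i) : ℝ) ≤ M.toReal := by
  rw [← ENNReal.ofReal_le_iff_le_toReal hM]
  have h1 : ENNReal.ofReal (∑ i, (inner ℝ (K (f i)) (f i) : ℝ))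
      = ∑ i, (‖(inner ℝ (K (f i)) (f i) : ℝ)‖₊ : ℝ≥0∞) := by
    rw [ENNReal.ofReal_sum_of_nonneg fun i _ => hnn i]
    exact Finset.sum_congr rfl fun i _ => by
      rw [ENNReal.ofReal, Real.toNNReal_eq_nnnorm_of_nonneg (hnn i)]
  rw [h1]
  refine le_trans ?_ hKM
  exact le_iSup_of_le m (le_iSup_of_le f (le_iSup_of_le f
    (le_iSup_of_le hf (le_iSup_of_le hf le_rfl))))

lemma young_type {t₀ t ε : ℝ} (ht₀ : 0 < t₀) (ht : 0 < t) (hε : 0 < ε) (hε2 : ε < 2) :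
    ∀ x : ℝ, 0 ≤ x → t * x ^ ((2:ℝ) - ε)
      ≤ t₀ * x ^ (2:ℕ) + t * ((t/t₀) ^ (1/ε : ℝ)) ^ ((2:ℝ) - ε) := by
  intro x hx
  set R : ℝ := (t/t₀) ^ (1/ε : ℝ) with hR
  have hRpos : 0 < R := Real.rpow_pos_of_pos (div_pos ht ht₀) _
  rcases le_or_gt x R with hxR | hxR
  · have : t * x ^ ((2:ℝ) - ε) ≤ t * R ^ ((2:ℝ) - ε) :=
      mul_le_mul_of_nonneg_left (Real.rpow_le_rpow hx hxR (by linarith)) ht.le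
    nlinarith [sq_nonneg x, mul_nonneg ht₀.le (sq_nonneg x)]
  · have hx0 : 0 < x := hRpos.trans hxR
    have hRe : R ^ (ε : ℝ) = t / t₀ := by
      rw [hR, ← Real.rpow_mul (div_pos ht ht₀).le, one_div_mul_cancel hε.ne', Real.rpow_one]
    have hxe : R ^ (ε:ℝ) ≤ x ^ (ε:ℝ) := Real.rpow_le_rpow hRpos.le hxR.le hε.le
    have hsplit : x ^ ((2:ℝ) - ε) = x ^ (2:ℕ) * x ^ (-ε : ℝ) := by
      rw [show (2:ℝ) - ε = (2:ℝ) + (-ε) by ring, Real.rpow_add hx0]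
      norm_num [Real.rpow_natCast]
    have hkey : t * x ^ (-ε : ℝ) ≤ t₀ := by
      rw [Real.rpow_neg hx0.le]
      have hxepos : 0 < x ^ (ε:ℝ) := Real.rpow_pos_of_pos hx0 _
      have : (x ^ (ε:ℝ))⁻¹ ≤ (R ^ (ε:ℝ))⁻¹ := by
        exact inv_anti₀ (hRe ▸ div_pos ht ht₀) hxe
      calc t * (x ^ (ε:ℝ))⁻¹ ≤ t * (R ^ (ε:ℝ))⁻¹ := mul_le_mul_of_nonneg_left this ht.le
      _ = t₀ := by rw [hRe]; field_simp
    calc t * x ^ ((2:ℝ) - ε) = (t * x ^ (-ε : ℝ)) * x ^ (2:ℕ) := by rw [hsplit]; ring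
    _ ≤ t₀ * x ^ (2:ℕ) := mul_le_mul_of_nonneg_right hkey (by positivity)
    _ ≤ _ := le_add_of_nonneg_right (by positivity)


end UniformFerniqueAux

open scoped NNReal Topology
open Submodule

/-- Uniform Fernique theorem: if `𝒜` is a compact set (in trace norm) of non-negative
self-adjoint trace-class covariance operators on a separable Hilbert space `H`, then there
is `t₀ > 0` with `sup_{K ∈ 𝒜} ∫ exp(t₀ ‖h‖²) d𝒩(0,K) < ∞`, and for every `ε ∈ (0,2)` and
every `t > 0`, `sup_{K ∈ 𝒜} ∫ exp(t ‖h‖^{2−ε}) d𝒩(0,K) < ∞`. -/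
theorem gaussian_family_uniform_fernique
    {H : Type*} [NormedAddCommGroup H] [InnerProductSpace ℝ H] [CompleteSpace H]
    [SecondCountableTopology H] [MeasurableSpace H] [BorelSpace H]
    (𝒜 : Set (H →L[ℝ] H))
    (hpos : ∀ K ∈ 𝒜, ContinuousLinearMap.IsPositive K)
    (htc : ∀ K ∈ 𝒜, traceNorm K ≠ ⊤)
    (hcompact : TraceNormCompact 𝒜)
    (γ : (H →L[ℝ] H) → Measure H)
    (hγ : ∀ K ∈ 𝒜, IsCenteredGaussian (γ K) K) :
    (∃ t₀ : ℝ, 0 < t₀ ∧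
      (⨆ K ∈ 𝒜, ∫⁻ h, ENNReal.ofReal (Real.exp (t₀ * ‖h‖ ^ 2)) ∂(γ K)) < ⊤) ∧
    (∀ ε : ℝ, 0 < ε → ε < 2 → ∀ t : ℝ, 0 < t →
      (⨆ K ∈ 𝒜, ∫⁻ h, ENNReal.ofReal (Real.exp (t * ‖h‖ ^ ((2 : ℝ) - ε))) ∂(γ K)) < ⊤) := by
  classical
  obtain ⟨M, hMt, hM⟩ := traceNorm_bound_of_compact htc hcompact
  set M₀ : ℝ := M.toReal + 1 with hM₀def
  have hM₀pos : 0 < M₀ := by have := ENNReal.toReal_nonneg (a := M); positivity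
  set t₀ : ℝ := 1 / (4 * M₀) with ht₀def
  have ht₀ : 0 < t₀ := by positivity
  have main : ∀ K ∈ 𝒜, ∫⁻ h, ENNReal.ofReal (Real.exp (t₀ * ‖h‖ ^ 2)) ∂(γ K)
      ≤ ENNReal.ofReal (Real.exp (2 * t₀ * M₀)) := by
    intro K hK
    haveI : IsProbabilityMeasure (γ K) := (hγ K hK).1
    have hmap := (hγ K hK).2
    have hsym : ∀ x y : H, (inner ℝ (K x) y : ℝ) = (inner ℝ x (K y) : ℝ) := fun x y =>
      ContinuousLinearMap.isSelfAdjoint_iff_isSymmetric.mp (hpos K hK).isSelfAdjoint x y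
    have hKnn : ∀ g : H, 0 ≤ (inner ℝ (K g) g : ℝ) := fun g => by
      have := (hpos K hK).inner_nonneg_left g
      simpa using this
    haveI : Nonempty H := ⟨0⟩
    obtain ⟨d, hd⟩ := TopologicalSpace.exists_dense_seq H
    set V : ℕ → Submodule ℝ H := fun n => Submodule.span ℝ (d '' Set.Iio n) with hVdef
    have hVfin : ∀ n, FiniteDimensional ℝ (V n) := fun n =>
      FiniteDimensional.span_of_finite ℝ ((Set.finite_Iio n).image d)
    have hVproj : ∀ n, HasOrthogonalProjection (V n) := fun n => by
      haveI := hVfin n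
      haveI : CompleteSpace (V n) := FiniteDimensional.complete ℝ (V n)
      infer_instance
    have hn : ∀ n : ℕ, ∫⁻ x, ENNReal.ofReal
        (Real.exp (t₀ * ‖(orthogonalProjection (V n) x : H)‖ ^ 2)) ∂(γ K)
        ≤ ENNReal.ofReal (Real.exp (2 * t₀ * M₀)) := by
      intro n
      haveI := hVfin n
      haveI := hVproj n
      obtain ⟨f, hforth, hfdiag, hfproj⟩ := diagonalize K hsym (V n)
      have hlnn : ∀ i, 0 ≤ (inner ℝ (K (f i)) (f i) : ℝ) := fun i => hKnn (f i)
      have htr' : ∑ i, (inner ℝ (K (f i)) (f i) : ℝ) ≤ M₀ :=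
        (partial_trace_le hMt (hM K hK) hforth hlnn).trans (by rw [hM₀def]; linarith)
      have ht4 : ∀ i, t₀ * (inner ℝ (K (f i)) (f i) : ℝ) ≤ 1/4 := by
        intro i
        have hi : (inner ℝ (K (f i)) (f i) : ℝ) ≤ M₀ :=
          (Finset.single_le_sum (fun j _ => hlnn j) (Finset.mem_univ i)).trans htr'
        rw [ht₀def]
        rw [div_mul_eq_mul_div, one_mul, div_le_div_iff₀ (by positivity) (by norm_num)]
        nlinarith
      have hkb := key_bound (γ K) K hmap hKnn f hfdiag ht₀ ht4
      have hstart : (∫⁻ x, ENNReal.ofReal (Real.exp (t₀ * ‖(orthogonalProjection (V n) x : H)‖ ^ 2)) ∂(γ K)) = ∫⁻ x, ENNReal.ofReal (Real.exp (t₀ * ∑ i, (inner ℝ (f i) x : ℝ)^2)) ∂(γ K) :=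
        lintegral_congr fun x => by rw [hfproj x]
      rw [hstart]
      refine hkb.trans ?_
      apply ENNReal.ofReal_le_ofReal
      apply Real.exp_le_exp.2
      exact mul_le_mul_of_nonneg_left htr' (by positivity)
    -- monotone convergence
    have hmono_proj : ∀ (x : H) (a b : ℕ), a ≤ b →
        ‖(orthogonalProjection (V a) x : H)‖ ≤ ‖(orthogonalProjection (V b) x : H)‖ := by
      intro x a b hab
      haveI := hVproj a; haveI := hVproj b
      exact proj_norm_mono (Submodule.span_mono (Set.image_mono (Set.Iio_subset_Iio hab))) x
    have htendproj : ∀ x : H, Tendsto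
        (fun n => ‖(orthogonalProjection (V n) x : H)‖) atTop (𝓝 ‖x‖) := by
      intro x
      have h1 : Tendsto (fun n => (orthogonalProjection (V n) x : H)) atTop (𝓝 x) := by
        rw [Metric.tendsto_atTop]
        intro ε hε
        obtain ⟨k, hk⟩ := hd.exists_dist_lt x (half_pos hε)
        refine ⟨k + 1, fun n hn => ?_⟩
        haveI := hVproj n
        have hdk : d k ∈ V n := Submodule.subset_span ⟨k, Nat.lt_of_succ_le hn, rfl⟩
        calc dist (orthogonalProjection (V n) x : H) x
            = ‖x - (orthogonalProjection (V n) x : H)‖ := by rw [dist_comm, dist_eq_norm]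
          _ ≤ ‖x - d k‖ := dist_proj_le x hdk
          _ = dist x (d k) := (dist_eq_norm _ _).symm
          _ < ε := by linarith
      exact h1.norm
    have hmeasn : ∀ n, Measurable fun x : H => ENNReal.ofReal
        (Real.exp (t₀ * ‖(orthogonalProjection (V n) x : H)‖ ^ 2)) := by
      intro n
      haveI := hVproj n
      have hc : Continuous fun x : H => ‖(orthogonalProjection (V n) x : H)‖ :=
        (continuous_subtype_val.comp (orthogonalProjection (V n)).continuous).norm
      exact (ENNReal.continuous_ofReal.comp
        (Real.continuous_exp.comp (continuous_const.mul (hc.pow 2)))).measurable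
    have hptsup : ∀ x : H, (⨆ n, ENNReal.ofReal
        (Real.exp (t₀ * ‖(orthogonalProjection (V n) x : H)‖ ^ 2)))
        = ENNReal.ofReal (Real.exp (t₀ * ‖x‖ ^ 2)) := by
      intro x
      have hm : Monotone fun n => ENNReal.ofReal
          (Real.exp (t₀ * ‖(orthogonalProjection (V n) x : H)‖ ^ 2)) := fun a b hab =>
        ENNReal.ofReal_le_ofReal (Real.exp_le_exp.2 (mul_le_mul_of_nonneg_left
          (pow_le_pow_left₀ (norm_nonneg _) (hmono_proj x a b hab) 2) ht₀.le))
      have htd : Tendsto (fun n => ENNReal.ofReal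
          (Real.exp (t₀ * ‖(orthogonalProjection (V n) x : H)‖ ^ 2))) atTop
          (𝓝 (ENNReal.ofReal (Real.exp (t₀ * ‖x‖ ^ 2)))) := by
        exact (ENNReal.continuous_ofReal.tendsto _).comp
          ((Real.continuous_exp.tendsto _).comp
            (((htendproj x).pow 2).const_mul t₀))
      exact tendsto_nhds_unique (tendsto_atTop_iSup hm) htd
    have heq : ∫⁻ h, ENNReal.ofReal (Real.exp (t₀ * ‖h‖ ^ 2)) ∂(γ K)
        = ⨆ n, ∫⁻ x, ENNReal.ofReal
          (Real.exp (t₀ * ‖(orthogonalProjection (V n) x : H)‖ ^ 2)) ∂(γ K) := by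
      rw [← lintegral_iSup hmeasn (fun a b hab x => ENNReal.ofReal_le_ofReal
        (Real.exp_le_exp.2 (mul_le_mul_of_nonneg_left
          (pow_le_pow_left₀ (norm_nonneg _) (hmono_proj x a b hab) 2) ht₀.le)))]
      exact lintegral_congr fun x => (hptsup x).symm
    rw [heq]
    exact iSup_le hn
  refine ⟨⟨t₀, ht₀, ?_⟩, ?_⟩
  · exact (iSup₂_le main).trans_lt ENNReal.ofReal_lt_top
  · intro ε hε hε2 t ht
    set C : ℝ := t * ((t/t₀) ^ (1/ε : ℝ)) ^ ((2:ℝ) - ε) with hCdef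
    have hper : ∀ K ∈ 𝒜, ∫⁻ h, ENNReal.ofReal (Real.exp (t * ‖h‖ ^ ((2:ℝ) - ε))) ∂(γ K)
        ≤ ENNReal.ofReal (Real.exp C) * ENNReal.ofReal (Real.exp (2 * t₀ * M₀)) := by
      intro K hK
      haveI : IsProbabilityMeasure (γ K) := (hγ K hK).1
      have s1 : (∫⁻ h, ENNReal.ofReal (Real.exp (t * ‖h‖ ^ ((2:ℝ) - ε))) ∂(γ K)) ≤ ∫⁻ h, ENNReal.ofReal (Real.exp C) * ENNReal.ofReal (Real.exp (t₀ * ‖h‖ ^ 2)) ∂(γ K) := by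
        apply lintegral_mono
        intro h
        dsimp only
        rw [← ENNReal.ofReal_mul (Real.exp_nonneg _), ← Real.exp_add]
        apply ENNReal.ofReal_le_ofReal
        apply Real.exp_le_exp.2
        have := young_type ht₀ ht hε hε2 ‖h‖ (norm_nonneg h)
        rw [hCdef]
        linarith
      have s2 : (∫⁻ h, ENNReal.ofReal (Real.exp C) * ENNReal.ofReal (Real.exp (t₀ * ‖h‖ ^ 2)) ∂(γ K)) = ENNReal.ofReal (Real.exp C) * ∫⁻ h, ENNReal.ofReal (Real.exp (t₀ * ‖h‖ ^ 2)) ∂(γ K) :=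
        lintegral_const_mul' _ _ ENNReal.ofReal_ne_top
      exact s1.trans (s2.le.trans (mul_le_mul_right (main K hK) _))
    exact (iSup₂_le hper).trans_lt
      (ENNReal.mul_lt_top ENNReal.ofReal_lt_top ENNReal.ofReal_lt_top)
end

section
/- Let U ⊂ ℝ^{N₀} be a set, σ : ℝ → ℝ an L-Lipschitz function with σ(x)² ≤ A(1+|x|^r), 0 < r ≤ 2, and let h₁, …, h_n : U → ℝ be functions satisfying (i) Σ_{j=1}^n (h_j(x) − h_j(y))² ≤ a n ‖x−y‖² for all x, y ∈ U and (ii) Σ_{j=1}^n h_j(x)² ≤ b n for all x ∈ U. Define the empirical kernel 𝒦(x,y) = (1/n) Σ_{j=1}^n σ(h_j(x)) σ(h_j(y)). Then for all (x,y), (x',y') ∈ U²: (𝒦(x,y) − 𝒦(x',y'))² ≤ 4 A (1 + b^{r/2}) L² a (‖x−x'‖² + ‖y−y'‖²), and 𝒦(x,y)² ≤ (A(1 + b^{r/2}))². -/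
/-- Deterministic equicontinuity and boundedness of the empirical kernel
`𝒦(x,y) = (1/n) ∑_j σ(h_j(x)) σ(h_j(y))`: if `σ` is `L`-Lipschitz with
`σ(x)² ≤ A(1+|x|^r)`, `0 < r ≤ 2`, and the `h_j` satisfy
`∑_j (h_j(x) − h_j(y))² ≤ a n ‖x−y‖²` and `∑_j h_j(x)² ≤ b n` on `U`, then
`(𝒦(x,y) − 𝒦(x',y'))² ≤ 4A(1+b^{r/2}) L² a (‖x−x'‖² + ‖y−y'‖²)` and
`𝒦(x,y)² ≤ (A(1+b^{r/2}))²`. -/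
theorem empirical_kernel_equicontinuity_bound
    {E : Type*} [NormedAddCommGroup E] (U : Set E)
    (σ : ℝ → ℝ) (L A r : ℝ) (hr0 : 0 < r) (hr2 : r ≤ 2)
    (hLip : ∀ s u : ℝ, |σ s - σ u| ≤ L * |s - u|)
    (hgrowth : ∀ s : ℝ, σ s ^ 2 ≤ A * (1 + |s| ^ r))
    (n : ℕ) (hn : 0 < n) (h : Fin n → E → ℝ)
    (a b : ℝ) (ha : 0 ≤ a) (hb : 0 ≤ b)
    (hequi : ∀ x ∈ U, ∀ y ∈ U, ∑ j, (h j x - h j y) ^ 2 ≤ a * n * ‖x - y‖ ^ 2)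
    (hbound : ∀ x ∈ U, ∑ j, (h j x) ^ 2 ≤ b * n) :
    (∀ x ∈ U, ∀ y ∈ U, ∀ x' ∈ U, ∀ y' ∈ U,
      ((n : ℝ)⁻¹ * ∑ j, σ (h j x) * σ (h j y)
          - (n : ℝ)⁻¹ * ∑ j, σ (h j x') * σ (h j y')) ^ 2
        ≤ 4 * A * (1 + b ^ (r / 2)) * L ^ 2 * a * (‖x - x'‖ ^ 2 + ‖y - y'‖ ^ 2)) ∧
    (∀ x ∈ U, ∀ y ∈ U,
      ((n : ℝ)⁻¹ * ∑ j, σ (h j x) * σ (h j y)) ^ 2 ≤ (A * (1 + b ^ (r / 2))) ^ 2) := by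
  have hnR : (0:ℝ) < n := by exact_mod_cast hn
  have hA : 0 ≤ A := by
    have := hgrowth 0
    rw [abs_zero, Real.zero_rpow hr0.ne'] at this
    nlinarith [sq_nonneg (σ 0)]
  set C : ℝ := A * (1 + b ^ (r / 2)) with hC
  have hbr : (0:ℝ) ≤ b ^ (r / 2) := Real.rpow_nonneg hb _
  have hC0 : 0 ≤ C := by positivity
  -- Jensen / growth bound: ∑ σ(h j x)² ≤ n * C
  have growthsum : ∀ x ∈ U, ∑ j, σ (h j x) ^ 2 ≤ n * C := by
    intro x hx
    have hw' : ∑ _j : Fin n, (n:ℝ)⁻¹ = 1 := by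
      rw [Finset.sum_const, Finset.card_univ, Fintype.card_fin, nsmul_eq_mul]
      field_simp
    have jensen := Real.rpow_arith_mean_le_arith_mean_rpow Finset.univ
      (fun _ : Fin n => (n:ℝ)⁻¹) (fun j => |h j x| ^ r)
      (fun i _ => by positivity) hw' (fun i _ => Real.rpow_nonneg (abs_nonneg _) _)
      (p := 2 / r) (by rw [le_div_iff₀ hr0]; linarith)
    have hz : ∀ j : Fin n, (|h j x| ^ r) ^ (2 / r) = h j x ^ 2 := by
      intro j
      rw [← Real.rpow_mul (abs_nonneg _), mul_div_cancel₀ 2 hr0.ne', Real.rpow_two, sq_abs]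
    simp only [hz] at jensen
    have hrhs : ∑ j : Fin n, (n:ℝ)⁻¹ * h j x ^ 2 ≤ b := by
      rw [← Finset.mul_sum]
      calc (n:ℝ)⁻¹ * ∑ j, h j x ^ 2 ≤ (n:ℝ)⁻¹ * (b * n) := by
            exact mul_le_mul_of_nonneg_left (hbound x hx) (by positivity)
        _ = b := by field_simp
    -- so (∑ n⁻¹ |h|^r) ^ (2/r) ≤ b, hence ∑ n⁻¹ |h|^r ≤ b^(r/2)
    set S : ℝ := ∑ j : Fin n, (n:ℝ)⁻¹ * |h j x| ^ r with hS
    have hS0 : 0 ≤ S := Finset.sum_nonneg fun j _ => by positivity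
    have hSb : S ≤ b ^ (r / 2) := by
      have h1 : (S ^ (2 / r)) ^ (r / 2) ≤ b ^ (r / 2) :=
        Real.rpow_le_rpow (Real.rpow_nonneg hS0 _) (jensen.trans hrhs) (by positivity)
      rwa [← Real.rpow_mul hS0, div_mul_div_comm, mul_comm 2 r, div_self (by positivity),
        Real.rpow_one] at h1
    have hsum_abs : ∑ j : Fin n, |h j x| ^ r ≤ n * b ^ (r / 2) := by
      have : ∑ j : Fin n, |h j x| ^ r = n * S := by
        rw [hS, Finset.mul_sum]
        congr 1; ext j; field_simp
      rw [this]
      exact mul_le_mul_of_nonneg_left hSb (le_of_lt hnR)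
    calc ∑ j, σ (h j x) ^ 2 ≤ ∑ j : Fin n, A * (1 + |h j x| ^ r) :=
          Finset.sum_le_sum fun j _ => hgrowth _
      _ = A * (n + ∑ j : Fin n, |h j x| ^ r) := by
          rw [← Finset.mul_sum, Finset.sum_add_distrib, Finset.sum_const, Finset.card_univ,
            Fintype.card_fin, nsmul_eq_mul, mul_one]
      _ ≤ A * (n + n * b ^ (r / 2)) := by
          exact mul_le_mul_of_nonneg_left (by linarith) hA
      _ = n * C := by rw [hC]; ring
  -- Lipschitz sum bound
  have lipsum : ∀ x ∈ U, ∀ x' ∈ U,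
      ∑ j, (σ (h j x) - σ (h j x')) ^ 2 ≤ L ^ 2 * (a * n * ‖x - x'‖ ^ 2) := by
    intro x hx x' hx'
    calc ∑ j, (σ (h j x) - σ (h j x')) ^ 2 ≤ ∑ j, L ^ 2 * (h j x - h j x') ^ 2 := by
          refine Finset.sum_le_sum fun j _ => ?_
          have := hLip (h j x) (h j x')
          nlinarith [abs_nonneg (σ (h j x) - σ (h j x')), abs_nonneg (h j x - h j x'),
            sq_abs (σ (h j x) - σ (h j x')), sq_abs (h j x - h j x')]
      _ = L ^ 2 * ∑ j, (h j x - h j x') ^ 2 := by rw [Finset.mul_sum]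
      _ ≤ L ^ 2 * (a * n * ‖x - x'‖ ^ 2) :=
          mul_le_mul_of_nonneg_left (hequi x hx x' hx') (sq_nonneg L)
  -- single cross-term bound
  have term : ∀ x ∈ U, ∀ x' ∈ U, ∀ y ∈ U,
      ((n:ℝ)⁻¹ * ∑ j, (σ (h j x) - σ (h j x')) * σ (h j y)) ^ 2
        ≤ C * L ^ 2 * a * ‖x - x'‖ ^ 2 := by
    intro x hx x' hx' y hy
    have cs := Finset.sum_mul_sq_le_sq_mul_sq Finset.univ
      (fun j => σ (h j x) - σ (h j x')) (fun j => σ (h j y))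
    have h1 : (∑ j, (σ (h j x) - σ (h j x')) * σ (h j y)) ^ 2
        ≤ (L ^ 2 * (a * n * ‖x - x'‖ ^ 2)) * (n * C) := by
      refine cs.trans (mul_le_mul (lipsum x hx x' hx') (growthsum y hy)
        (Finset.sum_nonneg fun j _ => sq_nonneg _) (by positivity))
    rw [mul_pow]
    calc ((n:ℝ)⁻¹) ^ 2 * (∑ j, (σ (h j x) - σ (h j x')) * σ (h j y)) ^ 2
        ≤ ((n:ℝ)⁻¹) ^ 2 * ((L ^ 2 * (a * n * ‖x - x'‖ ^ 2)) * (n * C)) :=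
          mul_le_mul_of_nonneg_left h1 (by positivity)
      _ = C * L ^ 2 * a * ‖x - x'‖ ^ 2 := by field_simp
  constructor
  · intro x hx y hy x' hx' y' hy'
    set T1 : ℝ := (n:ℝ)⁻¹ * ∑ j, (σ (h j x) - σ (h j x')) * σ (h j y) with hT1
    set T2 : ℝ := (n:ℝ)⁻¹ * ∑ j, (σ (h j y) - σ (h j y')) * σ (h j x') with hT2
    have hsplit : (n : ℝ)⁻¹ * ∑ j, σ (h j x) * σ (h j y)
        - (n : ℝ)⁻¹ * ∑ j, σ (h j x') * σ (h j y') = T1 + T2 := by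
      rw [hT1, hT2, ← mul_add, ← mul_sub, ← Finset.sum_add_distrib, ← Finset.sum_sub_distrib]
      congr 1
      exact Finset.sum_congr rfl fun j _ => by ring
    have b1 := term x hx x' hx' y hy
    have b2 := term y hy y' hy' x' hx'
    rw [← hT1] at b1
    rw [← hT2] at b2
    rw [hsplit]
    have hM : 0 ≤ C * L ^ 2 * a := by positivity
    have hgoal : 4 * A * (1 + b ^ (r / 2)) * L ^ 2 * a * (‖x - x'‖ ^ 2 + ‖y - y'‖ ^ 2)
        = 4 * (C * L ^ 2 * a) * (‖x - x'‖ ^ 2 + ‖y - y'‖ ^ 2) := by rw [hC]; ring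
    rw [hgoal]
    nlinarith [sq_nonneg (T1 - T2), sq_nonneg (T1 + T2), norm_nonneg (x - x'),
      norm_nonneg (y - y'), sq_nonneg ‖x - x'‖, sq_nonneg ‖y - y'‖,
      mul_nonneg hM (sq_nonneg ‖x - x'‖), mul_nonneg hM (sq_nonneg ‖y - y'‖)]
  · intro x hx y hy
    have cs := Finset.sum_mul_sq_le_sq_mul_sq Finset.univ
      (fun j => σ (h j x)) (fun j => σ (h j y))
    have h1 : (∑ j, σ (h j x) * σ (h j y)) ^ 2 ≤ (n * C) * (n * C) := by
      refine cs.trans (mul_le_mul (growthsum x hx) (growthsum y hy)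
        (Finset.sum_nonneg fun j _ => sq_nonneg _) (by positivity))
    rw [mul_pow]
    calc ((n:ℝ)⁻¹) ^ 2 * (∑ j, σ (h j x) * σ (h j y)) ^ 2
        ≤ ((n:ℝ)⁻¹) ^ 2 * ((n * C) * (n * C)) := mul_le_mul_of_nonneg_left h1 (by positivity)
      _ = C ^ 2 := by field_simp
end
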